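/- arXiv:1306.1076 — 6 statements merged into one kernel-verified Lean document; each statement's English description precedes it below -/
import Mathlib

section
/- Let λ ∈ (0,1)^V satisfy λ_i + λ_j < 1 for all edges (i,j) ∈ E. If each vertex i sets its transmission intensity to r_i = log( λ_i (1-λ_i)^{d(i)-1} / Π_{j∈N(i)} (1-λ_i-λ_j) ), then λ is a zero-gradient point of the Bethe free energy: ∇F_B(λ; r) = 0, i.e., ∂F_B/∂y_i evaluated at y = λ equals 0 for every i ∈ V. -/
/-!
The partial derivative of `F_B(·; r)` in `y_i` is
`-r_i + (d(i)-1)(log(1-y_i)+1) + (log y_i + 1) - Σ_{j∈N(i)} (log(1-y_i-y_j)+1)`,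
the edge term being counted twice in the sum over ordered pairs and halved by the factor `1/2`.
For the given `r_i` the logarithms cancel at `y = λ`, leaving `(d(i)-1) + 1 - d(i) = 0`.
-/

open Finset Real

section

variable {V : Type*} [Fintype V] (G : SimpleGraph V) [DecidableRel G.Adj]

theorem SimpleGraph.sum_sum_neighborFinset_comm {M : Type*} [AddCommMonoid M] (f : V → V → M) :
    ∑ j, ∑ k ∈ G.neighborFinset j, f j k = ∑ j, ∑ k ∈ G.neighborFinset j, f k j :=
  Finset.sum_comm' fun j k => by simp [G.adj_comm]

noncomputable def betheFreeEnergy (r z : V → ℝ) : ℝ :=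
  -(∑ i, z i * r i)
    - ∑ i, ((((G.neighborFinset i).card : ℝ) - 1) * (1 - z i) * log (1 - z i)
          - z i * log (z i))
    + (1 / 2) * ∑ i, ∑ j ∈ G.neighborFinset i,
        (1 - z i - z j) * log (1 - z i - z j)

noncomputable def betheGradient (r z : V → ℝ) (i : V) : ℝ :=
  -r i + (((G.neighborFinset i).card : ℝ) - 1) * (log (1 - z i) + 1) + (log (z i) + 1)
    - ∑ j ∈ G.neighborFinset i, (log (1 - z i - z j) + 1)

variable {G} {z : ℝ → V → ℝ} {z' : V → ℝ} {s : ℝ}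

theorem hasDerivAt_sum_neighborFinset_mul_log (hz : ∀ j, HasDerivAt (fun t => z t j) (z' j) s)
    (hE : ∀ j k, G.Adj j k → 1 - z s j - z s k ≠ 0) :
    HasDerivAt (fun t => ∑ j, ∑ k ∈ G.neighborFinset j,
        (1 - z t j - z t k) * log (1 - z t j - z t k))
      (-(2 * ∑ j, (∑ k ∈ G.neighborFinset j, (log (1 - z s j - z s k) + 1)) * z' j)) s := by
  set L : V → V → ℝ := fun j k => log (1 - z s j - z s k) + 1
  have hterm : ∀ j, ∀ k ∈ G.neighborFinset j, HasDerivAt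
      (fun t => (1 - z t j - z t k) * log (1 - z t j - z t k)) (L j k * (-z' j - z' k)) s :=
    fun j k hk => (hasDerivAt_mul_log (hE j k ((G.mem_neighborFinset j k).1 hk))).comp
      (h₂ := fun x => x * log x) s (((hz j).const_sub 1).fun_sub (hz k))
  refine (HasDerivAt.fun_sum fun j _ => HasDerivAt.fun_sum (hterm j)).congr_deriv ?_
  have hL : ∀ j k, L k j = L j k := fun j k => by simp only [L, sub_sub, add_comm (z s k)]
  have hsymm : ∑ j, ∑ k ∈ G.neighborFinset j, L j k * z' k
      = ∑ j, ∑ k ∈ G.neighborFinset j, L j k * z' j := by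
    rw [G.sum_sum_neighborFinset_comm]
    simp only [hL]
  simp only [mul_sub, mul_neg, sum_sub_distrib, sum_neg_distrib, hsymm, sum_mul]
  ring

variable (r : V → ℝ)

theorem hasDerivAt_betheFreeEnergy_comp (hz : ∀ j, HasDerivAt (fun t => z t j) (z' j) s)
    (h0 : ∀ j, z s j ≠ 0) (h1 : ∀ j, 1 - z s j ≠ 0)
    (hE : ∀ j k, G.Adj j k → 1 - z s j - z s k ≠ 0) :
    HasDerivAt (fun t => betheFreeEnergy G r (z t)) (∑ j, betheGradient G r (z s) j * z' j) s := by
  have hlin : HasDerivAt (fun t => ∑ j, z t j * r j) (∑ j, z' j * r j) s :=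
    HasDerivAt.fun_sum fun j _ => (hz j).mul_const (r j)
  have hvert : HasDerivAt (fun t => ∑ j, ((((G.neighborFinset j).card : ℝ) - 1) *
        (1 - z t j) * log (1 - z t j) - z t j * log (z t j)))
      (∑ j, ((((G.neighborFinset j).card : ℝ) - 1) * ((log (1 - z s j) + 1) * -z' j)
        - (log (z s j) + 1) * z' j)) s := by
    refine HasDerivAt.fun_sum fun j _ => ?_
    have hent := (hasDerivAt_mul_log (h1 j)).comp (h₂ := fun x => x * log x) s
      ((hz j).const_sub 1)
    have hneg := (hasDerivAt_mul_log (h0 j)).comp (h₂ := fun x => x * log x) s (hz j)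
    simpa only [Function.comp_def, mul_assoc] using (hent.const_mul _).fun_sub hneg
  refine ((hlin.neg.sub hvert).add
    ((hasDerivAt_sum_neighborFinset_mul_log hz hE).const_mul (1 / 2))).congr_deriv ?_
  simp only [betheGradient, ← sum_neg_distrib, ← sum_sub_distrib, mul_sum, ← sum_add_distrib]
  refine sum_congr rfl fun j _ => ?_
  ring

theorem betheGradient_eq_zero_of_log_eq {x : V → ℝ} {i : V} (h0 : 0 < x i) (h1 : 0 < 1 - x i)
    (hE : ∀ j ∈ G.neighborFinset i, 0 < 1 - x i - x j)
    (hr : r i = log (x i * (1 - x i) ^ (((G.neighborFinset i).card : ℝ) - 1) /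
        ∏ j ∈ G.neighborFinset i, (1 - x i - x j))) :
    betheGradient G r x i = 0 := by
  have hlog : r i = log (x i) + (((G.neighborFinset i).card : ℝ) - 1) * log (1 - x i)
      - ∑ j ∈ G.neighborFinset i, log (1 - x i - x j) := by
    rw [hr, log_div (by positivity) (prod_pos hE).ne', log_mul h0.ne' (by positivity),
      log_rpow h1, log_prod fun j hj => (hE j hj).ne']
  rw [betheGradient, hlog, sum_add_distrib, sum_const, nsmul_one]
  ring

end

/-- BAS: if every vertex sets
`r_i = log( λ_i (1-λ_i)^{d(i)-1} / Π_{j∈N(i)} (1-λ_i-λ_j) )`,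
then `λ` is a zero-gradient point of the Bethe free energy `F_B(·;r)`:
every partial derivative of `F_B` at `λ` vanishes. -/
theorem bas_zero_gradient {V : Type*} [Fintype V] [DecidableEq V]
    (G : SimpleGraph V) [DecidableRel G.Adj]
    (lam : V → ℝ)
    (hl0 : ∀ i, 0 < lam i) (hl1 : ∀ i, lam i < 1)
    (hle : ∀ i j, G.Adj i j → lam i + lam j < 1)
    (r : V → ℝ)
    (hr : ∀ i, r i = Real.log
      (lam i * (1 - lam i) ^ (((G.neighborFinset i).card : ℝ) - 1) /
        ∏ j ∈ G.neighborFinset i, (1 - lam i - lam j)))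
    (F : (V → ℝ) → ℝ)
    (hF : F = fun z =>
      -(∑ i, z i * r i)
      - ∑ i, ((((G.neighborFinset i).card : ℝ) - 1) * (1 - z i) * Real.log (1 - z i)
              - z i * Real.log (z i))
      + (1 / 2) * ∑ i, ∑ j ∈ G.neighborFinset i,
          (1 - z i - z j) * Real.log (1 - z i - z j)) :
    ∀ i : V, HasDerivAt (fun t => F (Function.update lam i t)) 0 (lam i) := by
  intro i
  subst hF
  have hedge : ∀ j k, G.Adj j k → 0 < 1 - lam j - lam k := fun j k hjk => by
    linarith [hle j k hjk]
  have hderiv := hasDerivAt_betheFreeEnergy_comp r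
    (hasDerivAt_pi.1 (hasDerivAt_update lam i (lam i)))
    (by simpa using fun j => (hl0 j).ne') (by simpa [sub_eq_zero] using fun j => (hl1 j).ne')
    (by simpa using fun j k hjk => (hedge j k hjk).ne')
  have hgrad : betheGradient G r lam i = 0 :=
    betheGradient_eq_zero_of_log_eq r (hl0 i) (by linarith [hl1 i])
      (fun j hj => hedge i j ((G.mem_neighborFinset i j).1 hj)) (hr i)
  rwa [Function.update_eq_self, Fintype.sum_eq_single i fun j hj => by simp [hj],
    Pi.single_eq_same, mul_one, hgrad] at hderiv
end

section
/- For any probability distribution ν on I(G) supported on independent sets, the Bethe free energy can be written purely in terms of the first-order marginals y_i = P_ν(σ_i = 1): F_B(ν; r) = -Σ_i y_i r_i - Σ_i[(d(i)-1)(1-y_i)log(1-y_i) - y_i log y_i] + Σ_{(i,j)∈E}(1-y_i-y_j)log(1-y_i-y_j), where F_B(ν;r) = -E_ν[r·σ] - Σ_i H(σ_i) + Σ_{(i,j)∈E} I(σ_i;σ_j). -/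
/-!
On an edge `ij` the configurations `σ_i = σ_j = 1` have probability zero, so the joint law of
`(σ_i, σ_j)` is determined by the marginals: it puts masses `y_i`, `y_j`, `1 - y_i - y_j` on
`10`, `01`, `00`. Hence `I(σ_i; σ_j) = -(1-y_i)log(1-y_i) - (1-y_j)log(1-y_j)
+ (1-y_i-y_j)log(1-y_i-y_j)`, and summing over edges each vertex `i` collects the term
`-(1-y_i)log(1-y_i)` once per neighbour, i.e. `d(i)` times.
-/

open Finset Real

namespace SimpleGraph

variable {V M : Type*} [Fintype V] [AddCommMonoid M] (G : SimpleGraph V) [DecidableRel G.Adj]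

theorem sum_sum_neighborFinset_apply_right (f : V → M) :
    ∑ i, ∑ j ∈ G.neighborFinset i, f j = ∑ i, G.degree i • f i := by
  rw [sum_comm' (t' := univ) (s' := fun j => G.neighborFinset j) fun i j => by
    simp [G.adj_comm]]
  simp [card_neighborFinset_eq_degree]

end SimpleGraph

section Marginals

variable {V : Type*} (S : Finset (V → Bool)) (ν : (V → Bool) → ℝ)

def marginal (i : V) : ℝ := ∑ σ ∈ S, if σ i = true then ν σ else 0

def pairMarginal (i j : V) (a b : Bool) : ℝ :=
  ∑ σ ∈ S, if σ i = a ∧ σ j = b then ν σ else 0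

theorem sum_mul_sum_ite_eq_sum_marginal_mul [Fintype V] (r : V → ℝ) :
    ∑ σ ∈ S, ν σ * ∑ i, (if σ i then r i else 0) = ∑ i, marginal S ν i * r i := by
  simp_rw [mul_sum, marginal, sum_mul]
  rw [sum_comm]
  refine sum_congr rfl fun i _ => sum_congr rfl fun σ _ => ?_
  split_ifs <;> simp

variable {S ν} {i j : V} (h : ∀ σ ∈ S, ¬(σ i = true ∧ σ j = true))
include h

theorem pairMarginal_true_true_of_exclusive : pairMarginal S ν i j true true = 0 :=
  sum_eq_zero fun σ hσ => if_neg (h σ hσ)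

theorem pairMarginal_true_false_of_exclusive :
    pairMarginal S ν i j true false = marginal S ν i :=
  sum_congr rfl fun σ hσ => by
    have := h σ hσ
    revert this
    cases σ i <;> cases σ j <;> simp

theorem pairMarginal_false_true_of_exclusive :
    pairMarginal S ν i j false true = marginal S ν j :=
  sum_congr rfl fun σ hσ => by
    have := h σ hσ
    revert this
    cases σ i <;> cases σ j <;> simp

theorem pairMarginal_false_false_of_exclusive :
    pairMarginal S ν i j false false
      = ∑ σ ∈ S, ν σ - marginal S ν i - marginal S ν j := by
  simp only [pairMarginal, marginal, ← sum_sub_distrib]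
  refine sum_congr rfl fun σ hσ => ?_
  have := h σ hσ
  revert this
  cases σ i <;> cases σ j <;> simp

theorem neg_sum_pairMarginal_mul_log_of_exclusive (hν1 : ∑ σ ∈ S, ν σ = 1) :
    -∑ a, ∑ b, pairMarginal S ν i j a b * log (pairMarginal S ν i j a b)
      = -(marginal S ν i * log (marginal S ν i)) - marginal S ν j * log (marginal S ν j)
        - (1 - marginal S ν i - marginal S ν j)
          * log (1 - marginal S ν i - marginal S ν j) := by
  simp only [Fintype.sum_bool, pairMarginal_true_true_of_exclusive h,
    pairMarginal_true_false_of_exclusive h, pairMarginal_false_true_of_exclusive h,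
    pairMarginal_false_false_of_exclusive h, hν1, log_zero, mul_zero]
  ring

end Marginals

theorem bethe_free_energy_via_marginals_general {V : Type*} [Fintype V]
    (G : SimpleGraph V) [DecidableRel G.Adj]
    (S : Finset (V → Bool))
    (hS : ∀ σ : V → Bool, σ ∈ S ↔ ∀ i j : V, G.Adj i j → ¬(σ i = true ∧ σ j = true))
    (ν : (V → Bool) → ℝ)
    (hν1 : ∑ σ ∈ S, ν σ = 1)
    (r : V → ℝ)
    (y : V → ℝ) (hy : ∀ i, y i = ∑ σ ∈ S, if σ i = true then ν σ else 0)
    (H1 : V → ℝ)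
    (hH1 : ∀ i, H1 i = -(y i * Real.log (y i)) - (1 - y i) * Real.log (1 - y i))
    (p2 : V → V → Bool → Bool → ℝ)
    (hp2 : ∀ i j a b, p2 i j a b = ∑ σ ∈ S, if σ i = a ∧ σ j = b then ν σ else 0)
    (H2 : V → V → ℝ)
    (hH2 : ∀ i j, H2 i j = -∑ a : Bool, ∑ b : Bool, p2 i j a b * Real.log (p2 i j a b))
    (I : V → V → ℝ) (hI : ∀ i j, I i j = H1 i + H1 j - H2 i j)
    (FB : ℝ)
    (hFB : FB = -(∑ σ ∈ S, ν σ * ∑ i, if σ i then r i else 0)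
      - ∑ i, H1 i + (1 / 2) * ∑ i, ∑ j ∈ G.neighborFinset i, I i j) :
    FB = -(∑ i, y i * r i)
      - ∑ i, ((((G.neighborFinset i).card : ℝ) - 1) * (1 - y i) * Real.log (1 - y i)
              - y i * Real.log (y i))
      + (1 / 2) * ∑ i, ∑ j ∈ G.neighborFinset i,
          (1 - y i - y j) * Real.log (1 - y i - y j) := by
  have hy_marginal : y = marginal S ν := funext hy
  have hI_adj : ∀ i j, G.Adj i j → I i j = -((1 - y i) * log (1 - y i))
      - (1 - y j) * log (1 - y j) + (1 - y i - y j) * log (1 - y i - y j) := by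
    intro i j hij
    have hp : p2 i j = pairMarginal S ν i j := funext₂ (hp2 i j)
    have hexcl : ∀ σ ∈ S, ¬(σ i = true ∧ σ j = true) := fun σ hσ => (hS σ).1 hσ i j hij
    rw [hI, hH1, hH1, hH2, hp, neg_sum_pairMarginal_mul_log_of_exclusive hexcl hν1,
      ← hy_marginal]
    ring
  rw [hFB, sum_mul_sum_ite_eq_sum_marginal_mul, ← hy_marginal,
    sum_congr rfl fun i _ => sum_congr rfl fun j hj => hI_adj i j ((G.mem_neighborFinset i j).1 hj)]
  have hvertex : ∀ i, ((G.degree i : ℝ) - 1) * (1 - y i) * log (1 - y i) - y i * log (y i)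
      = G.degree i * ((1 - y i) * log (1 - y i)) + H1 i := fun i => by rw [hH1]; ring
  simp only [G.card_neighborFinset_eq_degree, hvertex, sum_add_distrib, sum_sub_distrib,
    sum_neg_distrib, sum_const, nsmul_eq_mul, G.sum_sum_neighborFinset_apply_right]
  ring

/-- for a distribution `ν` supported on the independent sets of
`G`, the Bethe free energy `F_B(ν;r) = -E_ν[r·σ] - Σ_i H(σ_i) + Σ_E I(σ_i;σ_j)`
is a function of the first-order marginals `y_i = P_ν(σ_i = 1)` only:
`F_B = -Σ_i y_i r_i - Σ_i[(d(i)-1)(1-y_i)log(1-y_i) - y_i log y_i]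
       + Σ_{(i,j)∈E}(1-y_i-y_j)log(1-y_i-y_j)`
(edge sums written as half the sum over ordered adjacent pairs). -/
theorem bethe_free_energy_via_marginals {V : Type*} [Fintype V] [DecidableEq V]
    (G : SimpleGraph V) [DecidableRel G.Adj]
    (S : Finset (V → Bool))
    (hS : ∀ σ : V → Bool, σ ∈ S ↔ ∀ i j : V, G.Adj i j → ¬(σ i = true ∧ σ j = true))
    (ν : (V → Bool) → ℝ)
    (hν0 : ∀ σ ∈ S, 0 ≤ ν σ) (hν1 : ∑ σ ∈ S, ν σ = 1)
    (r : V → ℝ)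
    (y : V → ℝ) (hy : ∀ i, y i = ∑ σ ∈ S, if σ i = true then ν σ else 0)
    (hy0 : ∀ i, 0 < y i) (hy1 : ∀ i, y i < 1)
    (hye : ∀ i j, G.Adj i j → y i + y j < 1)
    (H1 : V → ℝ)
    (hH1 : ∀ i, H1 i = -(y i * Real.log (y i)) - (1 - y i) * Real.log (1 - y i))
    (p2 : V → V → Bool → Bool → ℝ)
    (hp2 : ∀ i j a b, p2 i j a b = ∑ σ ∈ S, if σ i = a ∧ σ j = b then ν σ else 0)
    (H2 : V → V → ℝ)
    (hH2 : ∀ i j, H2 i j = -∑ a : Bool, ∑ b : Bool, p2 i j a b * Real.log (p2 i j a b))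
    (I : V → V → ℝ) (hI : ∀ i j, I i j = H1 i + H1 j - H2 i j)
    (FB : ℝ)
    (hFB : FB = -(∑ σ ∈ S, ν σ * ∑ i, if σ i then r i else 0)
      - ∑ i, H1 i + (1 / 2) * ∑ i, ∑ j ∈ G.neighborFinset i, I i j) :
    FB = -(∑ i, y i * r i)
      - ∑ i, ((((G.neighborFinset i).card : ℝ) - 1) * (1 - y i) * Real.log (1 - y i)
              - y i * Real.log (y i))
      + (1 / 2) * ∑ i, ∑ j ∈ G.neighborFinset i,
          (1 - y i - y j) * Real.log (1 - y i - y j) :=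
  bethe_free_energy_via_marginals_general G S hS ν hν1 r y hy H1 hH1 p2 hp2 H2 hH2 I hI FB hFB
end

section
/- Fix α > 0, β > 0, and y in the domain D with y_i ≥ δ₁ for all i, where D requires y_i + y_j ≤ 1 for edges. If y_i ≥ 1 - 2ε₂ with ε₂ = 1/(2(exp(β·2^α)+1)), then the partial derivative of K_B at y in coordinate i is negative: ∂K_B/∂y_i = β y_i^{-α} - (d(i)-1)log(1-y_i) - log y_i + Σ_{j∈N(i)} log(1-y_i-y_j) < 0. -/
/-!
Each neighbour term `log (1 - y i - y j)` is at most `log (1 - y i)`, so the partial derivative is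
at most `β y_i^{-α} - log (y_i / (1 - y_i))`. The threshold `1 - 2ε₂ = E / (E + 1)`, with
`E = exp (β 2^α) > 1`, exceeds `1/2`, so the first term is below `β 2^α`, while the log-odds of `y i`
is at least `log E = β 2^α`.
-/

open Real

lemma Finset.sum_log_sub_le_card_mul_log {ι : Type*} (s : Finset ι) {a : ℝ} {b : ι → ℝ}
    (hb : ∀ j ∈ s, 0 < b j ∧ b j < a) :
    ∑ j ∈ s, log (a - b j) ≤ s.card * log a := by
  simpa using s.sum_le_card_nsmul (fun j => log (a - b j)) (log a) fun j hj =>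
    log_le_log (by linarith [hb j hj]) (by linarith [hb j hj])

lemma Real.rpow_neg_lt_rpow_of_inv_lt {x c α : ℝ} (hα : 0 < α) (hc : 0 < c) (hx : c⁻¹ < x) :
    x ^ (-α) < c ^ α := by
  have hx0 : 0 < x := (inv_pos.2 hc).trans hx
  rw [rpow_neg hx0.le, ← inv_rpow hx0.le]
  exact rpow_lt_rpow (by positivity) ((inv_lt_comm₀ hc hx0).1 hx) hα

lemma le_div_one_sub_of_div_add_one_le {c y : ℝ} (hc : 0 < c) (hy : c / (c + 1) ≤ y)
    (hy1 : y < 1) : c ≤ y / (1 - y) := by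
  rw [div_le_iff₀ (by positivity)] at hy
  rw [le_div_iff₀ (by linarith)]
  linarith

theorem KB_partial_neg_near_one_general {V : Type*} [Fintype V]
    (G : SimpleGraph V) [DecidableRel G.Adj]
    (α β : ℝ) (hα : 0 < α) (hβ : 0 < β)
    (ε₂ : ℝ) (hε₂ : ε₂ = 1 / (2 * (Real.exp (β * (2 : ℝ) ^ α) + 1)))
    (y : V → ℝ)
    (i : V) (hyi1 : y i < 1)
    (hyj : ∀ j ∈ G.neighborFinset i, 0 < y j ∧ y i + y j < 1)
    (hbig : 1 - 2 * ε₂ ≤ y i) :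
    β * y i ^ (-α) - (((G.neighborFinset i).card : ℝ) - 1) * Real.log (1 - y i)
      - Real.log (y i)
      + ∑ j ∈ G.neighborFinset i, Real.log (1 - y i - y j) < 0 := by
  set E := exp (β * 2 ^ α)
  have hE : 1 < E := one_lt_exp_iff.2 (by positivity)
  have hyi_big : E / (E + 1) ≤ y i := by
    convert hbig using 1
    rw [hε₂]; field_simp; ring
  have hyi_half : 2⁻¹ < y i := by
    refine lt_of_lt_of_le ?_ hyi_big
    rw [lt_div_iff₀ (by positivity)]
    linarith
  have hyi : 0 < y i := by linarith
  have hsum := (G.neighborFinset i).sum_log_sub_le_card_mul_log (a := 1 - y i) (b := y)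
    fun j hj => ⟨(hyj j hj).1, by linarith [hyj j hj]⟩
  have hpow : β * y i ^ (-α) < β * 2 ^ α :=
    mul_lt_mul_of_pos_left (rpow_neg_lt_rpow_of_inv_lt hα two_pos hyi_half) hβ
  have hodds : β * 2 ^ α ≤ log (y i) - log (1 - y i) := by
    rw [← log_div hyi.ne' (by linarith), ← log_exp (β * 2 ^ α)]
    exact log_le_log (exp_pos _)
      (le_div_one_sub_of_div_add_one_le (exp_pos _) hyi_big hyi1)
  linarith

/-- if `y_i ≥ 1 - 2ε₂` with `ε₂ = 1/(2(exp(β·2^α)+1))`, then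
`∂K_B/∂y_i = β y_i^{-α} - (d(i)-1)log(1-y_i) - log y_i
             + Σ_{j∈N(i)} log(1-y_i-y_j) < 0`. -/
theorem KB_partial_neg_near_one {V : Type*} [Fintype V] [DecidableEq V]
    (G : SimpleGraph V) [DecidableRel G.Adj]
    (α β : ℝ) (hα : 0 < α) (hβ : 0 < β)
    (ε₂ : ℝ) (hε₂ : ε₂ = 1 / (2 * (Real.exp (β * (2 : ℝ) ^ α) + 1)))
    (δ₁ : ℝ) (hδ₁ : 0 < δ₁)
    (y : V → ℝ) (hyδ : ∀ k, δ₁ ≤ y k)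
    (i : V) (hyi1 : y i < 1)
    (hyj : ∀ j ∈ G.neighborFinset i, 0 < y j ∧ y i + y j < 1)
    (hbig : 1 - 2 * ε₂ ≤ y i) :
    β * y i ^ (-α) - (((G.neighborFinset i).card : ℝ) - 1) * Real.log (1 - y i)
      - Real.log (y i)
      + ∑ j ∈ G.neighborFinset i, Real.log (1 - y i - y j) < 0 :=
  KB_partial_neg_near_one_general G α β hα hβ ε₂ hε₂ y i hyi1 hyj hbig
end

section
/- Fix α > 0, β > 0 with β y_i^{-α} ≥ 1, and suppose y is in the domain with 1 - y_i - y_j ≥ δ₂ for all j ∈ N(i), maximum degree d. Let ε₁ = β 2^α δ₂^d / (4(1+β 2^α d δ₂^{d-1})). If y_i ≤ 2ε₁ and y_i ≤ 1/2, then ∂K_B/∂y_i = β y_i^{-α} - (d(i)-1)log(1-y_i) - log y_i + Σ_{j∈N(i)} log(1-y_i-y_j) > 0. -/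
/-!
The only possibly negative contribution is `-log y_i`. Since `y_i ≤ 2ε₁ ≤ (β 2^α / 2) δ₂^d`, the
bound `log x ≤ x - 1` gives `log y_i ≤ β 2^α / 2 - 1 + d log δ₂`. The neighbour terms contribute
at least `d(i) log δ₂ ≥ d log δ₂`, the term `-(d(i) - 1) log(1 - y_i)` is nonnegative, and
`β y_i^{-α} ≥ β 2^α` because `y_i ≤ 1/2`; so the sum is at least `β 2^α / 2 + 1`.
An isolated vertex is handled separately, by `log y_i ≤ log (1 - y_i)`.
-/

open Real

lemma two_rpow_le_rpow_neg {α y : ℝ} (hα : 0 ≤ α) (hy0 : 0 < y) (hy : y ≤ 1 / 2) :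
    (2 : ℝ) ^ α ≤ y ^ (-α) := by
  rw [rpow_neg hy0.le, ← inv_rpow hy0.le]
  refine rpow_le_rpow zero_le_two ?_ hα
  rw [le_inv_comm₀ two_pos hy0]
  linarith

lemma log_le_half_sub_one_add_log {a y t : ℝ} (hy : 0 < y) (ht : 0 < t) (h : y ≤ a / 2 * t) :
    log y ≤ a / 2 - 1 + log t := by
  have ha : 0 < a / 2 := pos_of_mul_pos_left (hy.trans_le h) ht.le
  calc log y ≤ log (a / 2 * t) := log_le_log hy h
    _ = log (a / 2) + log t := log_mul ha.ne' ht.ne'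
    _ ≤ a / 2 - 1 + log t := by gcongr; exact log_le_sub_one_of_pos ha

lemma card_mul_log_le_sum_log {ι : Type*} (s : Finset ι) (f : ι → ℝ) {δ : ℝ} (hδ : 0 < δ)
    (hf : ∀ j ∈ s, δ ≤ f j) : (s.card : ℝ) * log δ ≤ ∑ j ∈ s, log (f j) := by
  simpa using s.card_nsmul_le_sum (fun j => log (f j)) (log δ)
    fun j hj => log_le_log hδ (hf j hj)

theorem KB_partial_pos_near_zero_general {V : Type*} [Fintype V]
    (G : SimpleGraph V) [DecidableRel G.Adj]
    (α β : ℝ) (hα : 0 < α) (hβ : 0 < β)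
    (d : ℕ) (hd : ∀ k : V, (G.neighborFinset k).card ≤ d)
    (δ₂ : ℝ) (hδ₂ : 0 < δ₂)
    (ε₁ : ℝ)
    (hε₁ : ε₁ = β * (2 : ℝ) ^ α * δ₂ ^ (d : ℝ) /
      (4 * (1 + β * (2 : ℝ) ^ α * (d : ℝ) * δ₂ ^ ((d : ℝ) - 1))))
    (y : V → ℝ) (i : V)
    (hyi0 : 0 < y i)
    (hnbr : ∀ j ∈ G.neighborFinset i, 0 < y j ∧ δ₂ ≤ 1 - y i - y j)
    (hyi : y i ≤ 2 * ε₁) (hhalf : y i ≤ 1 / 2) :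
    0 < β * y i ^ (-α) - (((G.neighborFinset i).card : ℝ) - 1) * Real.log (1 - y i)
      - Real.log (y i)
      + ∑ j ∈ G.neighborFinset i, Real.log (1 - y i - y j) := by
  set N := G.neighborFinset i
  have hpowy : β * 2 ^ α ≤ β * y i ^ (-α) :=
    mul_le_mul_of_nonneg_left (two_rpow_le_rpow_neg hα.le hyi0 hhalf) hβ.le
  have hA : 0 < β * 2 ^ α := by positivity
  rcases N.eq_empty_or_nonempty with hN | ⟨j₀, hj₀⟩
  · have hlog : log (y i) ≤ log (1 - y i) := log_le_log hyi0 (by linarith)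
    simp only [hN, Finset.card_empty, Finset.sum_empty, Nat.cast_zero]
    linarith
  have hδ₂1 : δ₂ < 1 := by linarith [hnbr j₀ hj₀]
  have hlogδ₂ : log δ₂ ≤ 0 := log_nonpos hδ₂.le hδ₂1.le
  have hyi_le : y i ≤ β * 2 ^ α / 2 * δ₂ ^ (d : ℝ) := by
    have hB : 1 ≤ 1 + β * (2 : ℝ) ^ α * (d : ℝ) * δ₂ ^ ((d : ℝ) - 1) :=
      le_add_of_nonneg_right (by positivity)
    refine hyi.trans ?_
    rw [hε₁, mul_div_assoc', div_le_iff₀ (by positivity)]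
    nlinarith [mul_nonneg (mul_pos hA (rpow_pos_of_pos hδ₂ (d : ℝ))).le (sub_nonneg.mpr hB)]
  have hlogy := log_le_half_sub_one_add_log hyi0 (rpow_pos_of_pos hδ₂ _) hyi_le
  rw [log_rpow hδ₂] at hlogy
  have hsum : (d : ℝ) * log δ₂ ≤ ∑ j ∈ N, log (1 - y i - y j) :=
    (mul_le_mul_of_nonpos_right (by exact_mod_cast hd i) hlogδ₂).trans
      (card_mul_log_le_sum_log N _ hδ₂ fun j hj => (hnbr j hj).2)
  have hlog1y : ((N.card : ℝ) - 1) * log (1 - y i) ≤ 0 :=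
    mul_nonpos_of_nonneg_of_nonpos
      (sub_nonneg.mpr (by exact_mod_cast Finset.card_pos.mpr ⟨j₀, hj₀⟩))
      (log_nonpos (by linarith) (by linarith))
  linarith

/-- with `ε₁ = β 2^α δ₂^d / (4(1 + β 2^α d δ₂^{d-1}))`, if
`β y_i^{-α} ≥ 1`, `1 - y_i - y_j ≥ δ₂` for all neighbors `j`, `y_i ≤ 2ε₁`
and `y_i ≤ 1/2`, then
`∂K_B/∂y_i = β y_i^{-α} - (d(i)-1)log(1-y_i) - log y_i
             + Σ_{j∈N(i)} log(1-y_i-y_j) > 0`. -/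
theorem KB_partial_pos_near_zero {V : Type*} [Fintype V] [DecidableEq V]
    (G : SimpleGraph V) [DecidableRel G.Adj]
    (α β : ℝ) (hα : 0 < α) (hβ : 0 < β)
    (d : ℕ) (hd : ∀ k : V, (G.neighborFinset k).card ≤ d)
    (δ₂ : ℝ) (hδ₂ : 0 < δ₂)
    (ε₁ : ℝ)
    (hε₁ : ε₁ = β * (2 : ℝ) ^ α * δ₂ ^ (d : ℝ) /
      (4 * (1 + β * (2 : ℝ) ^ α * (d : ℝ) * δ₂ ^ ((d : ℝ) - 1))))
    (y : V → ℝ) (i : V)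
    (hyi0 : 0 < y i)
    (hpow : 1 ≤ β * y i ^ (-α))
    (hnbr : ∀ j ∈ G.neighborFinset i, 0 < y j ∧ δ₂ ≤ 1 - y i - y j)
    (hyi : y i ≤ 2 * ε₁) (hhalf : y i ≤ 1 / 2) :
    0 < β * y i ^ (-α) - (((G.neighborFinset i).card : ℝ) - 1) * Real.log (1 - y i)
      - Real.log (y i)
      + ∑ j ∈ G.neighborFinset i, Real.log (1 - y i - y j) :=
  KB_partial_pos_near_zero_general G α β hα hβ d hd δ₂ hδ₂ ε₁ hε₁ y i hyi0 hnbr hyi hhalf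
end

section
/- Suppose the weights μ(t) = t^{-1/2} / Σ_{s=1}^T s^{-1/2} for t = 1,…,T, and suppose per-step bounds (1/√t)(K_B(y*) - K_B(y(t))) ≤ ½(a_t - a_{t+1} + C n / t) hold for t ≥ t_δ (telescoping a_t = ‖y(t)-y*‖² with 0 ≤ a_t ≤ Cn), and K_B(y*) - K_B(y(t)) ≤ C n for t < t_δ. Then Σ_{t=1}^T μ(t)(K_B(y*) - K_B(y(t))) ≤ C'·(n log T)/√T for a constant C' depending only on C and t_δ. -/
/-!
Write `M = C n`. The normalising sum `Σ_{s ≤ T} s^{-1/2}` is at least `√T`, so it suffices to bound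
the unnormalised sum `Σ_{t ≤ T} t^{-1/2} Δ(t)` by a multiple of `M log T`. The fewer than `t_δ` early
terms contribute at most `t_δ M`. On the late terms the per-step bound telescopes: the differences
`a(t) - a(t+1)` add up to at most `M`, and the remainders `M / t` to at most `M (1 + log T)` by
the harmonic bound. Since `log T ≥ log 2 > 1/2`, the constants are absorbed into `M log T`.
-/

open Finset Real

lemma rpow_neg_half_eq_one_div_sqrt {x : ℝ} (hx : 0 ≤ x) : x ^ (-(1 : ℝ) / 2) = 1 / √x := by
  rw [neg_div, rpow_neg hx, ← sqrt_eq_rpow, one_div]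

lemma sum_Icc_one_div_le_one_add_log (T : ℕ) : ∑ t ∈ Icc 1 T, (1 : ℝ) / t ≤ 1 + log T := by
  simpa only [harmonic_eq_sum_Icc, Rat.cast_sum, Rat.cast_inv, Rat.cast_natCast, one_div]
    using harmonic_le_one_add_log T

lemma sqrt_le_sum_Icc_one_div_sqrt (T : ℕ) : √(T : ℝ) ≤ ∑ s ∈ Icc 1 T, 1 / √(s : ℝ) := by
  calc √(T : ℝ) = ∑ _s ∈ Icc 1 T, 1 / √(T : ℝ) := by
        rw [sum_const, Nat.card_Icc, nsmul_eq_mul, add_tsub_cancel_right, mul_one_div, div_sqrt]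
    _ ≤ ∑ s ∈ Icc 1 T, 1 / √(s : ℝ) := by
        refine sum_le_sum fun s hs => ?_
        rw [mem_Icc] at hs
        gcongr
        · exact sqrt_pos.mpr (by exact_mod_cast hs.1)
        · exact_mod_cast hs.2

lemma sum_Icc_sub_succ_le {a : ℕ → ℝ} {M : ℝ} (ha : ∀ t, 0 ≤ a t ∧ a t ≤ M) (m T : ℕ) :
    ∑ t ∈ Icc m T, (a t - a (t + 1)) ≤ M := by
  rcases le_or_gt m T with hmT | hTm
  · have htel : ∑ t ∈ Icc m T, (a t - a (t + 1)) = a m - a (T + 1) := by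
      rw [← neg_sub, ← sum_Icc_sub hmT a, ← sum_neg_distrib]
      simp only [neg_sub]
    linarith [ha m, ha (T + 1)]
  · simpa [Icc_eq_empty_of_lt hTm] using (ha 0).1.trans (ha 0).2

lemma sum_early_le {Δ : ℕ → ℝ} {M : ℝ} (hM : 0 ≤ M) {tδ : ℕ} (hΔ : ∀ t, t < tδ → Δ t ≤ M)
    (T : ℕ) : ∑ t ∈ Icc 1 T with t < tδ, 1 / √(t : ℝ) * Δ t ≤ tδ * M := by
  have hterm : ∀ t ∈ {t ∈ Icc 1 T | t < tδ}, 1 / √(t : ℝ) * Δ t ≤ M := by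
    intro t ht
    simp only [mem_filter, mem_Icc] at ht
    have hweight : 1 / √(t : ℝ) ≤ 1 :=
      div_le_one_of_le₀ (one_le_sqrt.mpr (by exact_mod_cast ht.1.1)) (sqrt_nonneg _)
    calc 1 / √(t : ℝ) * Δ t ≤ 1 / √(t : ℝ) * M := by gcongr; exact hΔ t ht.2
      _ ≤ M := mul_le_of_le_one_left hM hweight
  have hcard : #{t ∈ Icc 1 T | t < tδ} ≤ tδ := by
    calc #{t ∈ Icc 1 T | t < tδ} ≤ #(Ico 1 tδ) :=
          card_le_card fun t ht => by simp only [mem_filter, mem_Icc, mem_Ico] at ht ⊢; omega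
      _ ≤ tδ := by simp
  calc ∑ t ∈ Icc 1 T with t < tδ, 1 / √(t : ℝ) * Δ t ≤ #{t ∈ Icc 1 T | t < tδ} * M := by
        simpa only [nsmul_eq_mul] using sum_le_card_nsmul _ _ _ hterm
    _ ≤ tδ * M := by gcongr

lemma sum_late_le {Δ a : ℕ → ℝ} {M : ℝ} (hM : 0 ≤ M) {tδ T : ℕ}
    (hstep : ∀ t, 1 ≤ t → t ≤ T → tδ ≤ t → 1 / √(t : ℝ) * Δ t ≤ 1 / 2 * (a t - a (t + 1) + M / t))
    (ha : ∀ t, 0 ≤ a t ∧ a t ≤ M) :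
    ∑ t ∈ Icc 1 T with ¬t < tδ, 1 / √(t : ℝ) * Δ t ≤ M / 2 * (2 + log T) := by
  have hlate : {t ∈ Icc 1 T | ¬t < tδ} = Icc (max 1 tδ) T := by
    ext t
    simp only [mem_filter, mem_Icc, not_lt]
    omega
  have hharm : ∑ t ∈ Icc (max 1 tδ) T, M / t ≤ M * (1 + log T) := by
    calc ∑ t ∈ Icc (max 1 tδ) T, M / t ≤ ∑ t ∈ Icc 1 T, M / t :=
          sum_le_sum_of_subset_of_nonneg (Icc_subset_Icc_left (le_max_left 1 tδ))
            fun t _ _ => by positivity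
      _ = M * ∑ t ∈ Icc 1 T, (1 : ℝ) / t := by simp only [mul_sum, mul_one_div]
      _ ≤ M * (1 + log T) := by gcongr; exact sum_Icc_one_div_le_one_add_log T
  rw [hlate]
  calc ∑ t ∈ Icc (max 1 tδ) T, 1 / √(t : ℝ) * Δ t
      ≤ ∑ t ∈ Icc (max 1 tδ) T, 1 / 2 * (a t - a (t + 1) + M / t) :=
        sum_le_sum fun t ht => by
          rw [mem_Icc, max_le_iff] at ht
          exact hstep t ht.1.1 ht.2 ht.1.2
    _ = 1 / 2 * (∑ t ∈ Icc (max 1 tδ) T, (a t - a (t + 1)) + ∑ t ∈ Icc (max 1 tδ) T, M / t) := by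
        rw [← mul_sum, sum_add_distrib]
    _ ≤ M / 2 * (2 + log T) := by
        linarith [sum_Icc_sub_succ_le ha (max 1 tδ) T]

lemma sum_one_div_sqrt_mul_le {Δ a : ℕ → ℝ} {M : ℝ} (hM : 0 ≤ M) {tδ T : ℕ} (hT : 2 ≤ T)
    (hstep : ∀ t, 1 ≤ t → t ≤ T → tδ ≤ t → 1 / √(t : ℝ) * Δ t ≤ 1 / 2 * (a t - a (t + 1) + M / t))
    (ha : ∀ t, 0 ≤ a t ∧ a t ≤ M) (hΔ : ∀ t, t < tδ → Δ t ≤ M) :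
    ∑ t ∈ Icc 1 T, 1 / √(t : ℝ) * Δ t ≤ M * (2 * tδ + 3) * log T := by
  have hlog : 1 / 2 ≤ log T := by
    have : log 2 ≤ log T := log_le_log two_pos (by exact_mod_cast hT)
    linarith [log_two_gt_d9]
  rw [← sum_filter_add_sum_filter_not _ (· < tδ)]
  have hearly := sum_early_le hM hΔ T
  have hlate := sum_late_le hM hstep ha
  have htδ : (0 : ℝ) ≤ tδ := Nat.cast_nonneg tδ
  linarith [mul_le_mul_of_nonneg_left hlog hM, mul_le_mul_of_nonneg_left hlog (mul_nonneg htδ hM)]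

/-- weighted-average convergence bound.  With weights
`μ(t) = t^{-1/2} / Σ_{s=1}^T s^{-1/2}`, per-step telescoping bounds
`(1/√t)·Δ(t) ≤ ½(a(t) - a(t+1) + Cn/t)` for `t ≥ t_δ`, `0 ≤ a(t) ≤ Cn`,
and `Δ(t) ≤ Cn` for `t < t_δ`, there is a constant `C'` depending only on `C`
and `t_δ` such that `Σ_{t=1}^T μ(t)Δ(t) ≤ C'·n·log T/√T`. -/
theorem weighted_gap_bound (C : ℝ) (hC : 0 < C) (tδ : ℕ) :
    ∃ C' : ℝ, 0 < C' ∧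
      ∀ (T n : ℕ), 2 ≤ T → 1 ≤ n →
        ∀ (Δ a : ℕ → ℝ),
          (∀ t : ℕ, 1 ≤ t → t ≤ T → tδ ≤ t →
            (1 / Real.sqrt t) * Δ t ≤ (1 / 2) * (a t - a (t + 1) + C * n / t)) →
          (∀ t : ℕ, 0 ≤ a t ∧ a t ≤ C * n) →
          (∀ t : ℕ, t < tδ → Δ t ≤ C * n) →
          ∑ t ∈ Finset.Icc 1 T,
              ((t : ℝ) ^ (-(1 : ℝ) / 2) / ∑ s ∈ Finset.Icc 1 T, (s : ℝ) ^ (-(1 : ℝ) / 2)) * Δ t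
            ≤ C' * n * Real.log T / Real.sqrt T := by
  refine ⟨C * (2 * tδ + 3), by positivity, fun T n hT _ Δ a hstep ha hΔ => ?_⟩
  have hCn : 0 ≤ C * n := by positivity
  simp only [rpow_neg_half_eq_one_div_sqrt (Nat.cast_nonneg _)]
  have hnum := sum_one_div_sqrt_mul_le hCn hT hstep ha hΔ
  calc ∑ t ∈ Icc 1 T, 1 / √(t : ℝ) / (∑ s ∈ Icc 1 T, 1 / √(s : ℝ)) * Δ t
      = (∑ t ∈ Icc 1 T, 1 / √(t : ℝ) * Δ t) / ∑ s ∈ Icc 1 T, 1 / √(s : ℝ) := by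
        rw [sum_div]
        exact sum_congr rfl fun t _ => div_mul_eq_mul_div _ _ _
    _ ≤ C * n * (2 * tδ + 3) * log T / √(T : ℝ) :=
        div_le_div₀ (mul_nonneg (by positivity) (log_nonneg (by norm_cast; omega))) hnum
          (sqrt_pos.mpr (by positivity)) (sqrt_le_sum_Icc_one_div_sqrt T)
    _ = C * (2 * tδ + 3) * n * log T / √(T : ℝ) := by ring
end

section
/- Utility gap bound: let y* maximize K_B(y) = β Σ_i U_i(y_i) + H_B(y) over D_B, let r* be the Bethe intensities r*_i = log( y*_i (1-y*_i)^{d(i)-1} / Π_{j∈N(i)}(1-y*_i-y*_j) ), and let e_B(r*) ≥ |y*_i - s_i(r*)| for all i (the Bethe error). Assume U_i is α-fair. Then max_{x ∈ C(G)} Σ_i U_i(x_i) - Σ_i U_i(s_i(r*)) ≤ Σ_i e_B(r*)·s_i(r*)^{-α} + (n log 2)/β. -/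
/-- gradient inequality for α-fair utilities -/
lemma alpha_fair_grad_bound (α : ℝ) (hα : 0 < α) (U : ℝ → ℝ)
    (hU : ∀ x : ℝ, 0 < x → U x = if α = 1 then Real.log x else x ^ (1 - α) / (1 - α))
    {y s : ℝ} (hy : 0 < y) (hs : 0 < s) :
    U y - U s ≤ (y - s) * s ^ (-α) := by
  rw [hU y hy, hU s hs]
  have he : y / s - 1 = (y - s) / s := by field_simp
  by_cases h1 : α = 1
  · simp only [h1, if_true]
    rw [show (-(1:ℝ)) = -1 by ring, Real.rpow_neg_one]
    have hlog := Real.log_le_sub_one_of_pos (div_pos hy hs)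
    rw [Real.log_div hy.ne' hs.ne'] at hlog
    have he2 : (y - s) / s = (y - s) * s⁻¹ := by ring
    linarith [he2 ▸ he ▸ hlog]
  · simp only [h1, if_false]
    have hu : 0 < y / s := div_pos hy hs
    have hysp : y ^ (1 - α) = s ^ (1 - α) * (y / s) ^ (1 - α) := by
      rw [← Real.mul_rpow hs.le hu.le, mul_div_cancel₀ _ hs.ne']
    have hsp : (0:ℝ) < s ^ (1 - α) := Real.rpow_pos_of_pos hs _
    have hsa : s ^ (-α) = s ^ (1 - α) / s := by
      rw [show -α = (1 - α) - 1 by ring, Real.rpow_sub hs, Real.rpow_one]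
    have hkey : s ^ (1 - α) * (y / s - 1) = (y - s) * s ^ (-α) := by
      rw [hsa, he]; ring
    rcases lt_or_gt_of_ne (sub_ne_zero.mpr (Ne.symm h1) : (1:ℝ) - α ≠ 0) with hpneg | hppos
    · -- α > 1
      have hb : 1 + (1 - α) * (y / s - 1) ≤ (y / s) ^ (1 - α) := by
        rcases le_or_gt (1 + (1 - α) * (y / s - 1)) 0 with h | h
        · exact h.trans (Real.rpow_pos_of_pos hu _).le
        · have l1 := Real.log_le_sub_one_of_pos h
          have l2 := Real.log_le_sub_one_of_pos hu
          have l3 : (1 - α) * (y / s - 1) ≤ (1 - α) * Real.log (y / s) :=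
            mul_le_mul_of_nonpos_left l2 hpneg.le
          calc 1 + (1 - α) * (y / s - 1)
              = Real.exp (Real.log (1 + (1 - α) * (y / s - 1))) := (Real.exp_log h).symm
            _ ≤ Real.exp ((1 - α) * Real.log (y / s)) :=
                Real.exp_le_exp.mpr (by linarith)
            _ = (y / s) ^ (1 - α) := by rw [Real.rpow_def_of_pos hu, mul_comm]
      have hb' : s ^ (1 - α) + (1 - α) * ((y - s) * s ^ (-α)) ≤ y ^ (1 - α) := by
        rw [hysp, ← hkey]
        nlinarith [hb, hsp]
      rw [div_sub_div_same, div_le_iff_of_neg hpneg]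
      linarith
    · -- α < 1
      have hb : (y / s) ^ (1 - α) ≤ 1 + (1 - α) * (y / s - 1) := by
        have := rpow_one_add_le_one_add_mul_self (s := y / s - 1)
          (by linarith) hppos.le (by linarith)
        rwa [show 1 + (y / s - 1) = y / s by ring] at this
      have hb' : y ^ (1 - α) ≤ s ^ (1 - α) + (1 - α) * ((y - s) * s ^ (-α)) := by
        rw [hysp, ← hkey]
        nlinarith [hb, hsp]
      rw [div_sub_div_same, div_le_iff₀ hppos]
      linarith


/-- utility gap bound for BUM: let `y*` maximize
`K_B(y) = β Σ_i U(y_i) + H_B(y)` over `D_B`, let `r*` be the Bethe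
intensities for `y*`, let `s` be the true CSMA service rates under `r*`, and
let `e_B ≥ |y*_i - s_i|` for all `i`.  Then for every `x` in the feasible
rate region `C(G) ⊆ D_B`,
`Σ_i U(x_i) - Σ_i U(s_i) ≤ Σ_i e_B·s_i^{-α} + (n log 2)/β`. -/
theorem bum_utility_gap_bound {V : Type*} [Fintype V] [DecidableEq V]
    (G : SimpleGraph V) [DecidableRel G.Adj]
    (n : ℕ) (hn : n = Fintype.card V)
    (α β : ℝ) (hα : 0 < α) (hβ : 0 < β)
    (U : ℝ → ℝ)
    (hU : ∀ x : ℝ, 0 < x → U x = if α = 1 then Real.log x else x ^ (1 - α) / (1 - α))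
    (D : Set (V → ℝ))
    (hD : D = {y : V → ℝ | (∀ i, 0 ≤ y i) ∧ ∀ i j, G.Adj i j → y i + y j ≤ 1})
    (CG : Set (V → ℝ)) (hCG : CG ⊆ D)
    (HB K : (V → ℝ) → ℝ)
    (hK : ∀ y : V → ℝ, K y = β * ∑ i, U (y i) + HB y)
    (hHB : ∀ y ∈ D, 0 ≤ HB y ∧ HB y ≤ (n : ℝ) * Real.log 2)
    (ystar : V → ℝ) (hymem : ystar ∈ D) (hy0 : ∀ i, 0 < ystar i)
    (hmax : ∀ y ∈ D, K y ≤ K ystar)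
    (rstar : V → ℝ)
    (hr : ∀ i, rstar i = Real.log
      (ystar i * (1 - ystar i) ^ (((G.neighborFinset i).card : ℝ) - 1) /
        ∏ j ∈ G.neighborFinset i, (1 - ystar i - ystar j)))
    -- the true CSMA service rates under intensities `r*`:
    (S : Finset (V → Bool))
    (hS : ∀ σ : V → Bool, σ ∈ S ↔ ∀ i j : V, G.Adj i j → ¬(σ i = true ∧ σ j = true))
    (π : (V → Bool) → ℝ)
    (hπ : ∀ σ : V → Bool, π σ = Real.exp (∑ k, if σ k then rstar k else 0) /
      ∑ ρ ∈ S, Real.exp (∑ k, if ρ k then rstar k else 0))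
    (s : V → ℝ) (hs : ∀ i, s i = ∑ σ ∈ S, if σ i = true then π σ else 0)
    (hs0 : ∀ i, 0 < s i)
    (eB : ℝ) (heB0 : 0 ≤ eB) (heB : ∀ i, |ystar i - s i| ≤ eB) :
    ∀ x ∈ CG, ∑ i, U (x i) - ∑ i, U (s i) ≤
      (∑ i, eB * s i ^ (-α)) + (n : ℝ) * Real.log 2 / β := by
  intro x hx
  have hxD : x ∈ D := hCG hx
  have hA : β * ∑ i, U (x i) ≤ K ystar := by
    calc β * ∑ i, U (x i) ≤ β * ∑ i, U (x i) + HB x := by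
          linarith [(hHB x hxD).1]
      _ = K x := (hK x).symm
      _ ≤ K ystar := hmax x hxD
  have hB : K ystar ≤ β * ∑ i, U (ystar i) + (n : ℝ) * Real.log 2 := by
    rw [hK]
    linarith [(hHB ystar hymem).2]
  have h2 : ∑ i, U (x i) - ∑ i, U (ystar i) ≤ (n : ℝ) * Real.log 2 / β := by
    rw [le_div_iff₀ hβ]
    nlinarith [hA.trans hB]
  have h3 : ∑ i, U (ystar i) - ∑ i, U (s i) ≤ ∑ i, eB * s i ^ (-α) := by
    rw [← Finset.sum_sub_distrib]
    apply Finset.sum_le_sum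
    intro i _
    have hc := alpha_fair_grad_bound α hα U hU (hy0 i) (hs0 i)
    have hpos : (0:ℝ) < s i ^ (-α) := Real.rpow_pos_of_pos (hs0 i) _
    have hd : ystar i - s i ≤ eB := (abs_le.mp (heB i)).2
    nlinarith [hc, hpos, hd]
  linarith
end
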